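/- arXiv:1605.08462 — 2 statements merged into one kernel-verified Lean document; each statement's English description precedes it below -/
import Mathlib

section
/- Let 1 < p < ∞ and let (ρ*, λ*) be a saddle point of the Lagrangian for the p-modulus problem. Then ℓ_{ρ*}(γ) = 1 for every γ with λ*(γ) > 0, and for every h : E → ℝ with ℓ_h(γ) ≥ 0 for all γ with λ*(γ) > 0, one has ∑_e σ(e) h(e) ρ*(e)^{p−1} ≥ 0. In other words, the Lagrangian subfamily Γ_{λ*} is a Beurling subfamily. -/
/-- The Lagrangian for the `p`-modulus problem. -/
noncomputable def lagrangian {E ι : Type*} [Fintype E] [Fintype ι]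
    (σ : E → ℝ) (p : ℝ) (N : ι → E → ℝ) (ρ : E → ℝ) (lam : ι → ℝ) : ℝ :=
  ∑ e, σ e * |ρ e| ^ p + ∑ i, lam i * (1 - ∑ e, N i e * ρ e)

/-!
Maximality of the affine map `λ ↦ L(ρ*, λ)` on the orthant `λ ≥ 0` forces `ℓ_{ρ*} ≥ 1` and
complementary slackness, hence `ℓ_{ρ*} = 1` on `Γ_{λ*}`. Since `t ↦ |t|^p` is differentiable for
`p > 1`, minimality of `ρ ↦ L(ρ, λ*)` at `ρ*` gives the stationarity equation
`p ∑ σ |ρ*|^(p-2) ρ* h = ∑ λ* ℓ_h` for every `h`. Testing it on indicator functions shows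
`ρ* ≥ 0`, so its left side is `p ∑ σ h ρ*^(p-1)`, and for `h` with `ℓ_h ≥ 0` on `Γ_{λ*}` its right
side is nonnegative.
-/

section Dual

variable {ι : Type*} [Fintype ι] {a c : ι → ℝ}

lemma nonpos_of_forall_sum_mul_le (ha : ∀ i, 0 ≤ a i)
    (hmax : ∀ lam : ι → ℝ, (∀ i, 0 ≤ lam i) → ∑ i, lam i * c i ≤ ∑ i, a i * c i) (i : ι) :
    c i ≤ 0 := by
  classical
  have hsingle : (0 : ι → ℝ) ≤ Pi.single i 1 := Pi.single_nonneg.mpr zero_le_one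
  have := hmax (a + Pi.single i 1) fun j => add_nonneg (ha j) (hsingle j)
  simpa [add_mul, Finset.sum_add_distrib, Pi.single_apply] using this

lemma eq_zero_of_forall_sum_mul_le (ha : ∀ i, 0 ≤ a i)
    (hmax : ∀ lam : ι → ℝ, (∀ i, 0 ≤ lam i) → ∑ i, lam i * c i ≤ ∑ i, a i * c i)
    {i : ι} (hi : 0 < a i) : c i = 0 := by
  have hterm : ∀ j ∈ Finset.univ, a j * c j ≤ 0 := fun j _ =>
    mul_nonpos_of_nonneg_of_nonpos (ha j) (nonpos_of_forall_sum_mul_le ha hmax j)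
  have hsum : ∑ j, a j * c j = 0 :=
    le_antisymm (Finset.sum_nonpos hterm) (by simpa using hmax 0 fun _ => le_rfl)
  have := (Finset.sum_eq_zero_iff_of_nonpos hterm).mp hsum i (Finset.mem_univ i)
  exact (mul_eq_zero.mp this).resolve_left hi.ne'

end Dual

section Primal

variable {E ι : Type*} [Fintype E] [Fintype ι] {σ : E → ℝ} {p : ℝ} {N : ι → E → ℝ}
  {ρ : E → ℝ} {lam : ι → ℝ}

lemma hasDerivAt_lagrangian_add_smul (hp : 1 < p) (h : E → ℝ) :
    HasDerivAt (fun t : ℝ => lagrangian σ p N (ρ + t • h) lam)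
      (∑ e, σ e * (p * |ρ e| ^ (p - 2) * ρ e) * h e - ∑ i, lam i * ∑ e, N i e * h e) 0 := by
  have hline : ∀ e, HasDerivAt (fun t : ℝ => ρ e + t * h e) (h e) 0 := fun e =>
    (hasDerivAt_mul_const (h e)).const_add (ρ e)
  have henergy : ∀ e, HasDerivAt (fun t : ℝ => σ e * |ρ e + t * h e| ^ p)
      (σ e * (p * |ρ e| ^ (p - 2) * ρ e) * h e) 0 := fun e => by
    simpa [mul_assoc] using
      ((hasDerivAt_abs_rpow (ρ e) hp).comp_of_eq 0 (hline e) (by simp)).const_mul (σ e)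
  have hconstraint : ∀ i, HasDerivAt (fun t : ℝ => lam i * (1 - ∑ e, N i e * (ρ e + t * h e)))
      (-(lam i * ∑ e, N i e * h e)) 0 := fun i => by
    simpa using ((HasDerivAt.fun_sum fun e _ => (hline e).const_mul (N i e)).const_sub
      1).const_mul (lam i)
  simpa [lagrangian, sub_eq_add_neg] using
    (HasDerivAt.fun_sum fun e _ => henergy e).fun_add
      (HasDerivAt.fun_sum fun i _ => hconstraint i)

lemma lagrangian_stationarity (hp : 1 < p)
    (hmin : ∀ ρ' : E → ℝ, lagrangian σ p N ρ lam ≤ lagrangian σ p N ρ' lam) (h : E → ℝ) :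
    ∑ e, σ e * (p * |ρ e| ^ (p - 2) * ρ e) * h e = ∑ i, lam i * ∑ e, N i e * h e := by
  have hlocal : IsLocalMin (fun t : ℝ => lagrangian σ p N (ρ + t • h) lam) 0 :=
    Filter.Eventually.of_forall fun t => by simpa using hmin (ρ + t • h)
  exact sub_eq_zero.mp (hlocal.hasDerivAt_eq_zero (hasDerivAt_lagrangian_add_smul hp h))

lemma nonneg_of_forall_lagrangian_le (hσ : ∀ e, 0 < σ e) (hp : 1 < p)
    (hN : ∀ i e, 0 ≤ N i e) (hlam : ∀ i, 0 ≤ lam i)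
    (hmin : ∀ ρ' : E → ℝ, lagrangian σ p N ρ lam ≤ lagrangian σ p N ρ' lam) (e : E) :
    0 ≤ ρ e := by
  classical
  have hstat := lagrangian_stationarity hp hmin (Pi.single e 1)
  simp only [Pi.single_apply, mul_ite, mul_one, mul_zero, Finset.sum_ite_eq',
    Finset.mem_univ, if_true] at hstat
  by_contra! hneg
  have hgrad_neg : σ e * (p * |ρ e| ^ (p - 2) * ρ e) < 0 :=
    mul_neg_of_pos_of_neg (hσ e) (mul_neg_of_pos_of_neg (mul_pos (by linarith)
      (Real.rpow_pos_of_pos (abs_pos.mpr hneg.ne) _)) hneg)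
  have hdual_nonneg : 0 ≤ ∑ i, lam i * N i e := Finset.sum_nonneg fun i _ => mul_nonneg (hlam i) (hN i e)
  linarith

end Primal

lemma abs_rpow_sub_two_mul_self {x : ℝ} (hx : 0 ≤ x) {p : ℝ} (hp : p ≠ 1) :
    |x| ^ (p - 2) * x = x ^ (p - 1) := by
  rcases hx.eq_or_lt with rfl | hx
  · rw [mul_zero, Real.zero_rpow (sub_ne_zero.mpr hp)]
  · rw [abs_of_pos hx, ← Real.rpow_add_one hx.ne']
    ring_nf

/-- a saddle point `(ρ*, λ*)` of the Lagrangian yields a Beurling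
subfamily: `ℓ_{ρ*}(γ) = 1` whenever `λ*(γ) > 0`, and for every `h` with
`ℓ_h(γ) ≥ 0` on `Γ_{λ*}` one has `∑_e σ(e) h(e) ρ*(e)^{p-1} ≥ 0`. -/
theorem stmt10 {E ι : Type*} [Fintype E] [Fintype ι]
    (σ : E → ℝ) (hσ : ∀ e, 0 < σ e)
    (p : ℝ) (hp : 1 < p)
    (N : ι → E → ℝ) (hN : ∀ i e, 0 ≤ N i e)
    (ρstar : E → ℝ) (lamstar : ι → ℝ) (hlam : ∀ i, 0 ≤ lamstar i)
    (hsaddle₁ : ∀ lam : ι → ℝ, (∀ i, 0 ≤ lam i) →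
      lagrangian σ p N ρstar lam ≤ lagrangian σ p N ρstar lamstar)
    (hsaddle₂ : ∀ ρ : E → ℝ,
      lagrangian σ p N ρstar lamstar ≤ lagrangian σ p N ρ lamstar) :
    (∀ i, 0 < lamstar i → ∑ e, N i e * ρstar e = 1) ∧
      (∀ h : E → ℝ, (∀ i, 0 < lamstar i → 0 ≤ ∑ e, N i e * h e) →
        0 ≤ ∑ e, σ e * h e * ρstar e ^ (p - 1)) := by
  have hmax : ∀ lam : ι → ℝ, (∀ i, 0 ≤ lam i) → ∑ i, lam i * (1 - ∑ e, N i e * ρstar e) ≤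
      ∑ i, lamstar i * (1 - ∑ e, N i e * ρstar e) := fun lam hlam' => by
    simpa [lagrangian] using hsaddle₁ lam hlam'
  refine ⟨fun i hi => by linarith [eq_zero_of_forall_sum_mul_le hlam hmax hi], fun h hh => ?_⟩
  have hρ := nonneg_of_forall_lagrangian_le hσ hp hN hlam hsaddle₂
  have hstat := lagrangian_stationarity hp hsaddle₂ h
  have hdual : 0 ≤ ∑ i, lamstar i * ∑ e, N i e * h e := Finset.sum_nonneg fun i _ =>
    (hlam i).eq_or_lt.elim (fun h0 => by simp [← h0]) fun hi => mul_nonneg hi.le (hh i hi)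
  have hgrad : ∑ e, σ e * (p * |ρstar e| ^ (p - 2) * ρstar e) * h e =
      p * ∑ e, σ e * h e * ρstar e ^ (p - 1) := by
    rw [Finset.mul_sum]
    refine Finset.sum_congr rfl fun e _ => ?_
    rw [mul_assoc p, abs_rpow_sub_two_mul_self (hρ e) hp.ne']
    ring
  exact nonneg_of_mul_nonneg_right (hgrad ▸ hstat ▸ hdual) (by linarith)
end

section
/- If Γ is itself a minimal family for Mod_{p,σ}(Γ) (1 < p < ∞), then the optimal dual variable λ* is unique. -/
/-- The `p`-modulus of the subfamily indexed by `S ⊆ ι`. -/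
noncomputable def pModOn {E ι : Type*} [Fintype E]
    (σ : E → ℝ) (p : ℝ) (N : ι → E → ℝ) (S : Set ι) : ℝ :=
  sInf {x : ℝ | ∃ ρ : E → ℝ, (∀ e, 0 ≤ ρ e) ∧
    (∀ i ∈ S, 1 ≤ ∑ e, N i e * ρ e) ∧ x = ∑ e, σ e * |ρ e| ^ p}

/-- The dual objective function `g(λ)` for the `p`-modulus problem. -/
noncomputable def dualObj {E ι : Type*} [Fintype E] [Fintype ι]
    (σ : E → ℝ) (p : ℝ) (N : ι → E → ℝ) (lam : ι → ℝ) : ℝ :=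
  ∑ i, lam i -
    (p - 1) * ∑ e, σ e * ((1 / (p * σ e)) * ∑ i, lam i * N i e) ^ (p / (p - 1))


/-!
Weak duality, Young's inequality edge by edge, bounds `dualObj` on vectors supported in `S` by
`pModOn S`. At a maximiser `λ*` the KKT conditions make `ρ* = (λ* ᵥ* N / (p σ)) ^ (1/(p-1))`
admissible with energy `dualObj λ*`, so the maximum of the dual objective is the modulus of the
whole family. Strict convexity of `t ↦ t ^ (p/(p-1))` forces two maximisers to have the same
`λ ᵥ* N`, hence the same total mass; moving along the line through them until a coordinate vanishes
gives a maximiser supported in `Γ ∖ {γ}`, so `Mod(Γ) ≤ Mod(Γ ∖ {γ})`, against minimality.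
-/

open Matrix Finset

theorem HasDerivAt.nonpos_of_isMaxOn_Ici {f : ℝ → ℝ} {f' a : ℝ} (hf : HasDerivAt f f' a)
    (hmax : IsMaxOn f (Set.Ici a) a) : f' ≤ 0 := by
  have hcone : (1 : ℝ) ∈ posTangentConeAt (Set.Ici a) a :=
    mem_posTangentConeAt_of_segment_subset <| by
      rw [segment_eq_Icc (by linarith)]
      exact Set.Icc_subset_Ici_self
  simpa using hmax.localize.hasFDerivWithinAt_nonpos hf.hasFDerivAt.hasFDerivWithinAt hcone

theorem mul_mul_le_rpow_add_mul_rpow {p u r : ℝ} (hp : 1 < p) (hu : 0 ≤ u) (hr : 0 ≤ r) :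
    p * u * r ≤ r ^ p + (p - 1) * u ^ (p / (p - 1)) := by
  have young := Real.young_inequality_of_nonneg hr hu (Real.HolderConjugate.conjExponent hp)
  rw [Real.conjExponent] at young
  calc p * u * r = p * (r * u) := by ring
    _ ≤ p * (r ^ p / p + u ^ (p / (p - 1)) / (p / (p - 1))) := by gcongr
    _ = r ^ p + (p - 1) * u ^ (p / (p - 1)) := by field_simp

theorem exists_nonneg_add_smul_apply_eq_zero {ι : Type*} [Fintype ι] {y d : ι → ℝ}
    (hy : ∀ i, 0 ≤ y i) {i₀ : ι} (hi₀ : d i₀ < 0) :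
    ∃ t : ℝ, (∀ j, 0 ≤ (y + t • d) j) ∧ ∃ i, (y + t • d) i = 0 := by
  classical
  obtain ⟨i, hi, hmin⟩ := (univ.filter fun j => d j < 0).exists_min_image (fun j => y j / -d j)
    ⟨i₀, by simpa using hi₀⟩
  have hi : d i < 0 := by simpa using hi
  refine ⟨y i / -d i, fun j => ?_, i, ?_⟩
  · simp only [Pi.add_apply, Pi.smul_apply, smul_eq_mul]
    rcases lt_or_ge (d j) 0 with hj | hj
    · have := hmin j (by simpa using hj)
      rw [le_div_iff₀ (by linarith)] at this
      linarith
    · have : 0 ≤ y i / -d i := div_nonneg (hy i) (by linarith)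
      nlinarith [hy j]
  · have hd : d i ≠ 0 := hi.ne
    simp only [Pi.add_apply, Pi.smul_apply, smul_eq_mul]
    field_simp
    ring

theorem add_single_nonneg {ι : Type*} [DecidableEq ι] {lam : ι → ℝ} (hlam : ∀ j, 0 ≤ lam j)
    {i : ι} {t : ℝ} (ht : -lam i ≤ t) (j : ι) : 0 ≤ (lam + Pi.single i t : ι → ℝ) j := by
  rcases eq_or_ne j i with rfl | h
  · simp only [Pi.add_apply, Pi.single_eq_same]
    linarith
  · simpa [h] using hlam j

theorem vecMul_apply_nonneg {E ι : Type*} [Fintype ι] {N : Matrix ι E ℝ} (hN : ∀ i e, 0 ≤ N i e)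
    {lam : ι → ℝ} (hlam : ∀ i, 0 ≤ lam i) (e : E) : 0 ≤ (lam ᵥ* N) e :=
  sum_nonneg fun i _ => mul_nonneg (hlam i) (hN i e)

theorem pModOn_le_energy {E ι : Type*} [Fintype E] {σ : E → ℝ} {p : ℝ} {N : Matrix ι E ℝ}
    (hσ : ∀ e, 0 ≤ σ e) {S : Set ι} {ρ : E → ℝ} (hρ : ∀ e, 0 ≤ ρ e)
    (hadm : ∀ i ∈ S, 1 ≤ ∑ e, N i e * ρ e) : pModOn σ p N S ≤ ∑ e, σ e * |ρ e| ^ p :=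
  csInf_le ⟨0, by
    rintro _ ⟨ρ', -, -, rfl⟩
    exact sum_nonneg fun e _ => mul_nonneg (hσ e) (by positivity)⟩ ⟨ρ, hρ, hadm, rfl⟩

section DualProblem

variable {E ι : Type*} [Fintype E] [Fintype ι] {σ : E → ℝ} {p : ℝ} {N : Matrix ι E ℝ}

noncomputable def dualPenalty (σ : E → ℝ) (p : ℝ) (w : E → ℝ) : ℝ :=
  ∑ e, σ e * ((1 / (p * σ e)) * w e) ^ (p / (p - 1))

/-- The density `ρ*` of the stationarity relation, evaluated at `w = λ ᵥ* N`. -/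
noncomputable def dualDensity (σ : E → ℝ) (p : ℝ) (w : E → ℝ) (e : E) : ℝ :=
  ((1 / (p * σ e)) * w e) ^ (1 / (p - 1))

def IsDualOptimal (σ : E → ℝ) (p : ℝ) (N : Matrix ι E ℝ) (lam : ι → ℝ) : Prop :=
  (∀ i, 0 ≤ lam i) ∧ ∀ μ : ι → ℝ, (∀ i, 0 ≤ μ i) → dualObj σ p N μ ≤ dualObj σ p N lam

theorem dualObj_eq (lam : ι → ℝ) :
    dualObj σ p N lam = ∑ i, lam i - (p - 1) * dualPenalty σ p (lam ᵥ* N) :=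
  rfl

theorem dualObj_zero (hp : 1 < p) : dualObj σ p N 0 = 0 := by
  have hq : p / (p - 1) ≠ 0 := (div_pos (by linarith) (by linarith)).ne'
  simp [dualObj_eq, dualPenalty, zero_vecMul, Real.zero_rpow hq]

theorem dualObj_add_eq_of_sum_eq_zero_of_vecMul_eq_zero {lam d : ι → ℝ} (hsum : ∑ i, d i = 0)
    (hd : d ᵥ* N = 0) : dualObj σ p N (lam + d) = dualObj σ p N lam := by
  simp only [dualObj_eq, add_vecMul, hd, add_zero, Pi.add_apply, sum_add_distrib, hsum]

theorem continuous_dualObj (hp : 1 < p) : Continuous (dualObj σ p N) := by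
  have hq : 0 ≤ p / (p - 1) := div_nonneg (by linarith) (by linarith)
  unfold dualObj
  fun_prop (disch := exact Or.inr hq)

theorem dualPenalty_smul (hσ : ∀ e, 0 ≤ σ e) (hp : 0 ≤ p) {c : ℝ} (hc : 0 ≤ c) {w : E → ℝ}
    (hw : ∀ e, 0 ≤ w e) : dualPenalty σ p (c • w) = c ^ (p / (p - 1)) * dualPenalty σ p w := by
  rw [dualPenalty, dualPenalty, mul_sum]
  refine sum_congr rfl fun e _ => ?_
  have : 0 ≤ 1 / (p * σ e) * w e := mul_nonneg (by have := hσ e; positivity) (hw e)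
  rw [Pi.smul_apply, smul_eq_mul, mul_left_comm, Real.mul_rpow hc this]
  ring

theorem strictConvexOn_dualPenalty (hσ : ∀ e, 0 < σ e) (hp : 1 < p) :
    StrictConvexOn ℝ (Set.Ici 0) (dualPenalty σ p) := by
  have hq : 1 < p / (p - 1) := (one_lt_div (by linarith)).mpr (by linarith)
  refine ⟨convex_Ici 0, fun w hw w' hw' hne a b ha hb hab => ?_⟩
  set c : E → ℝ := fun e => 1 / (p * σ e)
  have hc : ∀ e, 0 < c e := fun e => by have := hσ e; simp only [c]; positivity
  have hterm : ∀ e, c e * (a • w + b • w') e = a • (c e * w e) + b • (c e * w' e) := fun e => by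
    simp only [Pi.add_apply, Pi.smul_apply, smul_eq_mul]; ring
  have hmem : ∀ v : E → ℝ, v ∈ Set.Ici 0 → ∀ e, c e * v e ∈ Set.Ici 0 := fun v hv e =>
    mul_nonneg (hc e).le (hv e)
  obtain ⟨e₀, he₀⟩ := Function.ne_iff.mp hne
  simp only [dualPenalty, smul_eq_mul, mul_sum]
  rw [← sum_add_distrib]
  refine sum_lt_sum (fun e _ => ?_) ⟨e₀, mem_univ _, ?_⟩
  · rw [hterm]
    have := (strictConvexOn_rpow hq).convexOn.2 (hmem w hw e) (hmem w' hw' e) ha.le hb.le hab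
    simp only [smul_eq_mul, c] at this ⊢
    nlinarith [mul_le_mul_of_nonneg_left this (hσ e).le]
  · rw [hterm]
    have := (strictConvexOn_rpow hq).2 (hmem w hw e₀) (hmem w' hw' e₀)
      (fun h => he₀ (mul_left_cancel₀ (hc e₀).ne' h)) ha hb hab
    simp only [smul_eq_mul, c] at this ⊢
    nlinarith [mul_lt_mul_of_pos_left this (hσ e₀)]

theorem dualObj_le_energy (hσ : ∀ e, 0 < σ e) (hp : 1 < p) (hN : ∀ i e, 0 ≤ N i e)
    {lam : ι → ℝ} (hlam : ∀ i, 0 ≤ lam i) {ρ : E → ℝ} (hρ : ∀ e, 0 ≤ ρ e)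
    (hadm : ∀ i, lam i ≠ 0 → 1 ≤ ∑ e, N i e * ρ e) :
    dualObj σ p N lam ≤ ∑ e, σ e * |ρ e| ^ p := by
  have hmass : ∑ i, lam i ≤ ∑ e, (lam ᵥ* N) e * ρ e :=
    calc ∑ i, lam i ≤ ∑ i, lam i * ∑ e, N i e * ρ e := sum_le_sum fun i _ => by
          rcases eq_or_ne (lam i) 0 with h | h
          · simp [h]
          · exact le_mul_of_one_le_right (hlam i) (hadm i h)
      _ = ∑ e, (lam ᵥ* N) e * ρ e := dotProduct_mulVec lam N ρ
  have hedge : ∀ e, (lam ᵥ* N) e * ρ e ≤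
      σ e * |ρ e| ^ p + (p - 1) * (σ e * ((1 / (p * σ e)) * (lam ᵥ* N) e) ^ (p / (p - 1))) := by
    intro e
    have hσe := hσ e
    have := mul_mul_le_rpow_add_mul_rpow hp
      (mul_nonneg (by positivity : 0 ≤ 1 / (p * σ e)) (vecMul_apply_nonneg hN hlam e)) (hρ e)
    rw [abs_of_nonneg (hρ e)]
    calc (lam ᵥ* N) e * ρ e = σ e * (p * ((1 / (p * σ e)) * (lam ᵥ* N) e) * ρ e) := by
          field_simp
      _ ≤ _ := by nlinarith
  have := hmass.trans (sum_le_sum fun e _ => hedge e)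
  rw [sum_add_distrib, ← mul_sum] at this
  rw [dualObj_eq, dualPenalty]
  linarith

/-- A large enough constant density is admissible. -/
theorem exists_admissible (hN : ∀ i e, 0 ≤ N i e) (hNz : ∀ i, N i ≠ 0) :
    ∃ ρ : E → ℝ, (∀ e, 0 ≤ ρ e) ∧ ∀ i, 1 ≤ ∑ e, N i e * ρ e := by
  have hrow : ∀ i, 0 < ∑ e, N i e := fun i => by
    obtain ⟨e, he⟩ := Function.ne_iff.mp (hNz i)
    exact sum_pos' (fun e _ => hN i e) ⟨e, mem_univ e, (hN i e).lt_of_ne' he⟩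
  set c := ∑ j, (∑ e, N j e)⁻¹
  have hc : ∀ i, (∑ e, N i e)⁻¹ ≤ c := fun i =>
    single_le_sum (f := fun j => (∑ e, N j e)⁻¹) (fun j _ => (inv_pos.mpr (hrow j)).le)
      (mem_univ i)
  refine ⟨fun _ => c, fun _ => sum_nonneg fun j _ => (inv_pos.mpr (hrow j)).le, fun i => ?_⟩
  rw [← sum_mul, ← mul_inv_cancel₀ (hrow i).ne']
  exact mul_le_mul_of_nonneg_left (hc i) (hrow i).le

theorem dualObj_le_pModOn (hσ : ∀ e, 0 < σ e) (hp : 1 < p) (hN : ∀ i e, 0 ≤ N i e)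
    (hNz : ∀ i, N i ≠ 0) {S : Set ι} {lam : ι → ℝ} (hlam : ∀ i, 0 ≤ lam i)
    (hsupp : ∀ i ∉ S, lam i = 0) : dualObj σ p N lam ≤ pModOn σ p N S := by
  obtain ⟨ρ, hρ, hadm⟩ := exists_admissible hN hNz
  refine le_csInf ⟨_, ρ, hρ, fun i _ => hadm i, rfl⟩ ?_
  rintro _ ⟨ρ', hρ', hadm', rfl⟩
  exact dualObj_le_energy hσ hp hN hlam hρ' fun i hi => hadm' i (not_imp_comm.mp (hsupp i) hi)

/-- Coercivity: weak duality at `λ / 2` bounds the mass of `λ` on `{dualObj ≥ 0}`. -/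
theorem mul_sum_le_of_dualObj_nonneg (hσ : ∀ e, 0 < σ e) (hp : 1 < p) (hN : ∀ i e, 0 ≤ N i e)
    {M : ℝ} (hM : ∀ μ : ι → ℝ, (∀ i, 0 ≤ μ i) → dualObj σ p N μ ≤ M) {lam : ι → ℝ}
    (hlam : ∀ i, 0 ≤ lam i) (hg : 0 ≤ dualObj σ p N lam) :
    (1 / 2 - (1 / 2 : ℝ) ^ (p / (p - 1))) * ∑ i, lam i ≤ M := by
  have hhalf := hM ((1 / 2 : ℝ) • lam) fun i => by simp [hlam i]
  rw [dualObj_eq, smul_vecMul, dualPenalty_smul (fun e => (hσ e).le) (by linarith)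
    (by norm_num) (vecMul_apply_nonneg hN hlam)] at hhalf
  simp only [Pi.smul_apply, smul_eq_mul, ← mul_sum] at hhalf
  rw [dualObj_eq] at hg
  have hp1 : 0 ≤ (p - 1) := by linarith
  have := mul_le_mul_of_nonneg_left hg (Real.rpow_nonneg (by norm_num : (0 : ℝ) ≤ 1 / 2)
    (p / (p - 1)))
  nlinarith

theorem exists_isDualOptimal (hσ : ∀ e, 0 < σ e) (hp : 1 < p) (hN : ∀ i e, 0 ≤ N i e)
    (hNz : ∀ i, N i ≠ 0) : ∃ lam, IsDualOptimal σ p N lam := by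
  set M := pModOn σ p N Set.univ
  have hM : ∀ μ : ι → ℝ, (∀ i, 0 ≤ μ i) → dualObj σ p N μ ≤ M := fun μ hμ =>
    dualObj_le_pModOn hσ hp hN hNz hμ fun i hi => (hi (Set.mem_univ i)).elim
  have hδ : 0 < 1 / 2 - (1 / 2 : ℝ) ^ (p / (p - 1)) := by
    have := Real.rpow_lt_rpow_of_exponent_gt (by norm_num : (0 : ℝ) < 1 / 2) (by norm_num)
      ((one_lt_div (by linarith : 0 < p - 1)).mpr (by linarith : p - 1 < p))
    rw [Real.rpow_one] at this
    linarith
  have hR : 0 ≤ M / (1 / 2 - (1 / 2 : ℝ) ^ (p / (p - 1))) :=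
    div_nonneg (by simpa [dualObj_zero hp] using hM 0 fun _ => le_rfl) hδ.le
  obtain ⟨lam, ⟨hlam, -⟩, hmax⟩ :=
    (isCompact_Icc (a := (0 : ι → ℝ)) (b := fun _ => _)).exists_isMaxOn ⟨0, le_rfl, fun _ => hR⟩
      (continuous_dualObj (σ := σ) (N := N) hp).continuousOn
  replace hmax := isMaxOn_iff.mp hmax
  refine ⟨lam, hlam, fun μ hμ => ?_⟩
  rcases lt_or_ge (dualObj σ p N μ) 0 with hneg | hnonneg
  · have := hmax 0 ⟨le_rfl, fun _ => hR⟩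
    rw [dualObj_zero hp] at this
    linarith
  · refine hmax μ ⟨hμ, fun i => ?_⟩
    rw [le_div_iff₀ hδ, mul_comm]
    calc _ ≤ (1 / 2 - (1 / 2 : ℝ) ^ (p / (p - 1))) * ∑ j, μ j :=
          mul_le_mul_of_nonneg_left (single_le_sum (fun j _ => hμ j) (mem_univ i)) hδ.le
      _ ≤ M := mul_sum_le_of_dualObj_nonneg hσ hp hN hM hμ hnonneg

theorem hasDerivAt_dualObj_add_single [DecidableEq ι] (hσ : ∀ e, σ e ≠ 0) (hp : 1 < p)
    (lam : ι → ℝ) (i : ι) :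
    HasDerivAt (fun t => dualObj σ p N (lam + Pi.single i t))
      (1 - ∑ e, N i e * dualDensity σ p (lam ᵥ* N) e) 0 := by
  have hp1 : p - 1 ≠ 0 := by linarith
  have hq : 1 ≤ p / (p - 1) := (one_le_div (by linarith)).mpr (by linarith)
  have hq1 : p / (p - 1) - 1 = 1 / (p - 1) := by field_simp; ring
  have hedge : ∀ e, HasDerivAt
      (fun t : ℝ => σ e * ((1 / (p * σ e)) * ((lam ᵥ* N) e + t * N i e)) ^ (p / (p - 1)))
      (N i e * dualDensity σ p (lam ᵥ* N) e / (p - 1)) 0 := by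
    intro e
    have hlin : HasDerivAt (fun t : ℝ => (1 / (p * σ e)) * ((lam ᵥ* N) e + t * N i e))
        ((1 / (p * σ e)) * N i e) 0 := by
      simpa using (((hasDerivAt_id (0 : ℝ)).mul_const (N i e)).const_add
        ((lam ᵥ* N) e)).const_mul (1 / (p * σ e))
    refine ((hlin.rpow_const (Or.inr hq)).const_mul (σ e)).congr_deriv ?_
    have := hσ e
    simp only [dualDensity, zero_mul, add_zero, hq1]
    field_simp
  have hfun : (fun t => dualObj σ p N (lam + Pi.single i t)) = fun t => (∑ j, lam j + t) -
      (p - 1) * ∑ e, σ e * ((1 / (p * σ e)) * ((lam ᵥ* N) e + t * N i e)) ^ (p / (p - 1)) := by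
    funext t
    simp [dualObj_eq, dualPenalty, add_vecMul, sum_add_distrib, mul_comm]
  rw [hfun]
  refine (((hasDerivAt_id' 0).const_add _).sub
    ((HasDerivAt.fun_sum fun e _ => hedge e).const_mul (p - 1))).congr_deriv ?_
  rw [← sum_div, mul_div_cancel₀ _ hp1]

theorem IsDualOptimal.one_le_sum_mul_dualDensity (hσ : ∀ e, σ e ≠ 0) (hp : 1 < p)
    {lam : ι → ℝ} (h : IsDualOptimal σ p N lam) (i : ι) :
    1 ≤ ∑ e, N i e * dualDensity σ p (lam ᵥ* N) e := by
  classical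
  have hmax : IsMaxOn (fun t => dualObj σ p N (lam + Pi.single i t)) (Set.Ici 0) 0 :=
    isMaxOn_iff.mpr fun t (ht : 0 ≤ t) => by
      simpa using h.2 _ (add_single_nonneg h.1 (by linarith [h.1 i]))
  linarith [(hasDerivAt_dualObj_add_single hσ hp lam i).nonpos_of_isMaxOn_Ici hmax]

theorem IsDualOptimal.sum_mul_dualDensity_eq_one (hσ : ∀ e, σ e ≠ 0) (hp : 1 < p)
    {lam : ι → ℝ} (h : IsDualOptimal σ p N lam) {i : ι} (hi : 0 < lam i) :
    ∑ e, N i e * dualDensity σ p (lam ᵥ* N) e = 1 := by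
  classical
  have hmax : IsLocalMax (fun t => dualObj σ p N (lam + Pi.single i t)) 0 := by
    filter_upwards [Ioi_mem_nhds (neg_lt_zero.mpr hi)] with t ht
    simpa using h.2 _ (add_single_nonneg h.1 (le_of_lt ht))
  linarith [hmax.hasDerivAt_eq_zero (hasDerivAt_dualObj_add_single hσ hp lam i)]

theorem dualObj_eq_energy_dualDensity (hσ : ∀ e, 0 < σ e) (hp : 1 < p) (hN : ∀ i e, 0 ≤ N i e)
    {lam : ι → ℝ} (hlam : ∀ i, 0 ≤ lam i)
    (hslack : ∀ i, lam i ≠ 0 → ∑ e, N i e * dualDensity σ p (lam ᵥ* N) e = 1) :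
    dualObj σ p N lam = ∑ e, σ e * |dualDensity σ p (lam ᵥ* N) e| ^ p := by
  set ρ := dualDensity σ p (lam ᵥ* N)
  have hp1 : 0 < p - 1 := by linarith
  have hmass : ∑ i, lam i = ∑ e, (lam ᵥ* N) e * ρ e :=
    calc ∑ i, lam i = ∑ i, lam i * ∑ e, N i e * ρ e := sum_congr rfl fun i _ => by
          rcases eq_or_ne (lam i) 0 with h | h
          · simp [h]
          · rw [hslack i h, mul_one]
      _ = ∑ e, (lam ᵥ* N) e * ρ e := dotProduct_mulVec lam N ρ
  have hedge : ∀ e, (lam ᵥ* N) e * ρ e =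
        p * (σ e * ((1 / (p * σ e)) * (lam ᵥ* N) e) ^ (p / (p - 1))) ∧
      σ e * |ρ e| ^ p = σ e * ((1 / (p * σ e)) * (lam ᵥ* N) e) ^ (p / (p - 1)) := by
    intro e
    have hσe := hσ e
    have hu : 0 ≤ (1 / (p * σ e)) * (lam ᵥ* N) e :=
      mul_nonneg (by positivity) (vecMul_apply_nonneg hN hlam e)
    have hexp : p / (p - 1) = 1 + 1 / (p - 1) := by field_simp; ring
    simp only [ρ, dualDensity]
    set u := (1 / (p * σ e)) * (lam ᵥ* N) e with hu_def
    have hw : (lam ᵥ* N) e = p * σ e * u := by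
      rw [hu_def]
      field_simp
    constructor
    · rw [hw, hexp, Real.rpow_add' hu (by rw [← hexp]; positivity), Real.rpow_one]
      ring
    · rw [abs_of_nonneg (Real.rpow_nonneg hu _), ← Real.rpow_mul hu]
      congr 2
      field_simp
  rw [dualObj_eq, hmass, dualPenalty, sum_congr rfl fun e _ => (hedge e).1,
    sum_congr rfl fun e _ => (hedge e).2, ← mul_sum]
  ring

theorem IsDualOptimal.pModOn_univ_le (hσ : ∀ e, 0 < σ e) (hp : 1 < p) (hN : ∀ i e, 0 ≤ N i e)
    {lam : ι → ℝ} (h : IsDualOptimal σ p N lam) :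
    pModOn σ p N Set.univ ≤ dualObj σ p N lam := by
  have hσ' : ∀ e, σ e ≠ 0 := fun e => (hσ e).ne'
  rw [dualObj_eq_energy_dualDensity hσ hp hN h.1 fun i hi =>
    h.sum_mul_dualDensity_eq_one hσ' hp ((h.1 i).lt_of_ne' hi)]
  refine pModOn_le_energy (fun e => (hσ e).le) (fun e => Real.rpow_nonneg ?_ _)
    fun i _ => h.one_le_sum_mul_dualDensity hσ' hp i
  have := hσ e
  exact mul_nonneg (by positivity) (vecMul_apply_nonneg hN h.1 e)

theorem IsDualOptimal.vecMul_eq (hσ : ∀ e, 0 < σ e) (hp : 1 < p) (hN : ∀ i e, 0 ≤ N i e)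
    {lam μ : ι → ℝ} (hlam : IsDualOptimal σ p N lam) (hμ : IsDualOptimal σ p N μ) :
    lam ᵥ* N = μ ᵥ* N := by
  by_contra hne
  have hmid := (strictConvexOn_dualPenalty hσ hp).2 (vecMul_apply_nonneg hN hlam.1)
    (vecMul_apply_nonneg hN hμ.1) hne (by norm_num : (0 : ℝ) < 1 / 2)
    (by norm_num : (0 : ℝ) < 1 / 2) (by norm_num)
  have hle := hlam.2 ((1 / 2 : ℝ) • lam + (1 / 2 : ℝ) • μ) fun i => by
    simp only [Pi.add_apply, Pi.smul_apply, smul_eq_mul]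
    linarith [hlam.1 i, hμ.1 i]
  have heq := le_antisymm (hlam.2 μ hμ.1) (hμ.2 lam hlam.1)
  rw [dualObj_eq, dualObj_eq, add_vecMul, smul_vecMul, smul_vecMul] at hle
  rw [dualObj_eq, dualObj_eq] at heq
  simp only [Pi.add_apply, Pi.smul_apply, smul_eq_mul, sum_add_distrib, ← mul_sum] at hle hmid
  nlinarith [mul_lt_mul_of_pos_left hmid (by linarith : 0 < p - 1)]

theorem IsDualOptimal.exists_apply_eq_zero (hσ : ∀ e, 0 < σ e) (hp : 1 < p)
    (hN : ∀ i e, 0 ≤ N i e) {lam μ : ι → ℝ} (hlam : IsDualOptimal σ p N lam)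
    (hμ : IsDualOptimal σ p N μ) (hne : lam ≠ μ) :
    ∃ ν i, IsDualOptimal σ p N ν ∧ ν i = 0 := by
  have hw := hlam.vecMul_eq hσ hp hN hμ
  have hsum : ∑ i, (μ - lam) i = 0 := by
    have heq := le_antisymm (hμ.2 lam hlam.1) (hlam.2 μ hμ.1)
    rw [dualObj_eq, dualObj_eq, hw] at heq
    simp only [Pi.sub_apply, sum_sub_distrib]
    linarith
  obtain ⟨i₀, hi₀⟩ : ∃ i, (μ - lam) i < 0 := by
    by_contra! h
    exact hne (sub_eq_zero.mp ((Fintype.sum_eq_zero_iff_of_nonneg h).mp hsum)).symm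
  obtain ⟨t, hnonneg, i, hi⟩ := exists_nonneg_add_smul_apply_eq_zero hlam.1 hi₀
  refine ⟨lam + t • (μ - lam), i, ⟨hnonneg, fun ν hν => ?_⟩, hi⟩
  rw [dualObj_add_eq_of_sum_eq_zero_of_vecMul_eq_zero]
  · exact hlam.2 ν hν
  · simp only [Pi.smul_apply, smul_eq_mul, ← mul_sum, hsum, mul_zero]
  · rw [smul_vecMul, sub_vecMul, hw, sub_self, smul_zero]

end DualProblem

/-- if `Γ` itself is a minimal family, the optimal dual variable is
unique. -/
theorem stmt13 {E ι : Type*} [Fintype E] [Fintype ι]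
    (σ : E → ℝ) (hσ : ∀ e, 0 < σ e)
    (p : ℝ) (hp : 1 < p)
    (N : ι → E → ℝ) (hN : ∀ i e, 0 ≤ N i e) (hNz : ∀ i, N i ≠ 0)
    (hmin : ∀ i : ι,
      pModOn σ p N (Set.univ \ {i}) < pModOn σ p N (Set.univ : Set ι)) :
    ∃! lamstar : ι → ℝ, (∀ i, 0 ≤ lamstar i) ∧
      ∀ lam : ι → ℝ, (∀ i, 0 ≤ lam i) → dualObj σ p N lam ≤ dualObj σ p N lamstar := by
  obtain ⟨lam, hlam⟩ := exists_isDualOptimal hσ hp hN hNz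
  refine ⟨lam, hlam, fun μ (hμ : IsDualOptimal σ p N μ) => by_contra fun hne => ?_⟩
  obtain ⟨ν, i, hν, hνi⟩ := hμ.exists_apply_eq_zero hσ hp hN hlam hne
  have hsupp : ∀ j ∉ Set.univ \ {i}, ν j = 0 := fun j hj => by
    rwa [show j = i by simpa using hj]
  linarith [hν.pModOn_univ_le hσ hp hN, dualObj_le_pModOn hσ hp hN hNz hν.1 hsupp, hmin i]
end
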